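/- arXiv:1505.02245 — 6 statements merged into one kernel-verified Lean document; each statement's English description precedes it below -/
import Mathlib

section
/- Let s ↦ S(s) ∈ ℝⁿ and s ↦ σ(s) ∈ ℝ be C¹ curves with S(0) = u, satisfying the Rankine–Hugoniot condition f(S(s)) − f(u) = σ(s)(S(s) − u) for all s, where moreover ∇q = ∇η ∇f. Then for any s ≥ 0 and any vector v: q(S(s)|v) − σ(s) η(S(s)|v) = q(u|v) − σ(s) η(u|v) + ∫₀ˢ σ'(t) η(u|S(t)) dt. -/
open scoped RealInnerProductSpace

/-- relative entropy η(a|b) -/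
noncomputable def relEta {n : ℕ} (η : EuclideanSpace ℝ (Fin n) → ℝ)
    (a b : EuclideanSpace ℝ (Fin n)) : ℝ :=
  η a - η b - ⟪gradient η b, a - b⟫

/-- relative entropy flux q(a|b) -/
noncomputable def relQ {n : ℕ} (f : EuclideanSpace ℝ (Fin n) → EuclideanSpace ℝ (Fin n))
    (η q : EuclideanSpace ℝ (Fin n) → ℝ) (a b : EuclideanSpace ℝ (Fin n)) : ℝ :=
  q a - q b - ⟪gradient η b, f a - f b⟫

/-! Differentiating the Rankine–Hugoniot condition gives `f'(S) S' = σ' (S - u) + σ S'`.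
With `∇q = ∇η ∇f`, the derivative of `q(S|v) - σ η(S|v)` is then
`⟪∇η(S) - ∇η(v), σ' (S - u)⟫ - σ' η(S|v) = σ' (η(u|S) - η(u|v))`, so
`q(S|v) - σ η(S|v) + σ η(u|v)` is a primitive of `σ' η(u|S)` that equals `q(u|v)` at `0`. -/

theorem ContDiff.continuous_gradient {F : Type*} [NormedAddCommGroup F] [InnerProductSpace ℝ F]
    [CompleteSpace F] {η : F → ℝ} {k : WithTop ℕ∞} (hη : ContDiff ℝ k η) (hk : k ≠ 0) :
    Continuous (gradient η) :=
  (InnerProductSpace.toDual ℝ F).symm.continuous.comp (hη.continuous_fderiv hk)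

theorem HasFDerivAt.apply_eq_of_rankineHugoniot {E : Type*} [NormedAddCommGroup E]
    [NormedSpace ℝ E] {f : E → E} {f' : E →L[ℝ] E} {S : ℝ → E} {σ : ℝ → ℝ} {u S' : E}
    {σ' t : ℝ} (hRH : ∀ s, f (S s) - f u = σ s • (S s - u))
    (hf : HasFDerivAt f f' (S t)) (hS : HasDerivAt S S' t) (hσ : HasDerivAt σ σ' t) :
    f' S' = σ' • (S t - u) + σ t • S' := by
  have lhs : HasDerivAt (fun s => f (S s) - f u) (f' S') t :=
    (hf.comp_hasDerivAt t hS).sub_const _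
  have rhs : HasDerivAt (fun s => σ s • (S s - u)) (σ t • S' + σ' • (S t - u)) t :=
    hσ.smul (hS.sub_const u)
  rw [funext hRH] at lhs
  rw [lhs.unique rhs, add_comm]

section RelativeEntropy

variable {n : ℕ} {f : EuclideanSpace ℝ (Fin n) → EuclideanSpace ℝ (Fin n)}
  {η q : EuclideanSpace ℝ (Fin n) → ℝ}

theorem continuous_relEta (hη : ContDiff ℝ 1 η) (a : EuclideanSpace ℝ (Fin n)) :
    Continuous (relEta η a) := by
  have hgrad := hη.continuous_gradient one_ne_zero
  unfold relEta
  fun_prop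

theorem HasDerivAt.relEta_left {S : ℝ → EuclideanSpace ℝ (Fin n)} {S' : EuclideanSpace ℝ (Fin n)}
    {t : ℝ} (hη : DifferentiableAt ℝ η (S t)) (hS : HasDerivAt S S' t)
    (b : EuclideanSpace ℝ (Fin n)) :
    HasDerivAt (fun s => relEta η (S s) b) ⟪gradient η (S t) - gradient η b, S'⟫ t := by
  have hηS := hη.hasFDerivAt.comp_hasDerivAt t hS
  have hlin := (hasDerivAt_const t (gradient η b)).inner ℝ (hS.sub_const b)
  refine ((hηS.sub_const (η b)).sub hlin).congr_deriv ?_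
  rw [← inner_gradient_left, inner_zero_left, add_zero, inner_sub_left]

theorem HasDerivAt.relQ_left {S : ℝ → EuclideanSpace ℝ (Fin n)} {S' : EuclideanSpace ℝ (Fin n)}
    {t : ℝ} (hf : DifferentiableAt ℝ f (S t)) (hq : DifferentiableAt ℝ q (S t))
    (hcomp : ∀ h, fderiv ℝ q (S t) h = ⟪gradient η (S t), fderiv ℝ f (S t) h⟫)
    (hS : HasDerivAt S S' t) (b : EuclideanSpace ℝ (Fin n)) :
    HasDerivAt (fun s => relQ f η q (S s) b)
      ⟪gradient η (S t) - gradient η b, fderiv ℝ f (S t) S'⟫ t := by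
  have hqS := hq.hasFDerivAt.comp_hasDerivAt t hS
  have hfS := hf.hasFDerivAt.comp_hasDerivAt t hS
  have hlin := (hasDerivAt_const t (gradient η b)).inner ℝ (hfS.sub_const (f b))
  refine ((hqS.sub_const (q b)).sub hlin).congr_deriv ?_
  rw [hcomp, inner_zero_left, add_zero, inner_sub_left]

theorem hasDerivAt_relQ_sub_mul_relEta_of_rankineHugoniot {S : ℝ → EuclideanSpace ℝ (Fin n)}
    {σ : ℝ → ℝ} {u v S' : EuclideanSpace ℝ (Fin n)} {σ' t : ℝ}
    (hf : DifferentiableAt ℝ f (S t)) (hη : DifferentiableAt ℝ η (S t))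
    (hq : DifferentiableAt ℝ q (S t))
    (hcomp : ∀ h, fderiv ℝ q (S t) h = ⟪gradient η (S t), fderiv ℝ f (S t) h⟫)
    (hRH : ∀ s, f (S s) - f u = σ s • (S s - u))
    (hS : HasDerivAt S S' t) (hσ : HasDerivAt σ σ' t) :
    HasDerivAt (fun s => relQ f η q (S s) v - σ s * relEta η (S s) v + σ s * relEta η u v)
      (σ' * relEta η u (S t)) t := by
  have hRH' := hf.hasFDerivAt.apply_eq_of_rankineHugoniot hRH hS hσ
  refine (((hS.relQ_left hf hq hcomp v).sub (hσ.mul (hS.relEta_left hη v))).add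
    (hσ.mul_const (relEta η u v))).congr_deriv ?_
  rw [hRH']
  simp only [relEta, inner_add_right, inner_smul_right, inner_sub_left, inner_sub_right]
  ring

end RelativeEntropy

theorem lax_identity_general {n : ℕ}
    (f : EuclideanSpace ℝ (Fin n) → EuclideanSpace ℝ (Fin n))
    (η q : EuclideanSpace ℝ (Fin n) → ℝ)
    (hf : ContDiff ℝ 1 f) (hη : ContDiff ℝ 2 η)
    (hq : ContDiff ℝ 1 q)
    (hcomp : ∀ x h, fderiv ℝ q x h = ⟪gradient η x, fderiv ℝ f x h⟫)
    (u : EuclideanSpace ℝ (Fin n)) (S : ℝ → EuclideanSpace ℝ (Fin n)) (σ : ℝ → ℝ)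
    (hS : ContDiff ℝ 1 S) (hσ : ContDiff ℝ 1 σ) (hS0 : S 0 = u)
    (hRH : ∀ s, f (S s) - f u = σ s • (S s - u)) :
    ∀ s ≥ (0:ℝ), ∀ v : EuclideanSpace ℝ (Fin n),
      relQ f η q (S s) v - σ s * relEta η (S s) v
        = relQ f η q u v - σ s * relEta η u v
          + ∫ t in (0:ℝ)..s, deriv σ t * relEta η u (S t) := by
  intro s _ v
  have hprimitive (t : ℝ) := hasDerivAt_relQ_sub_mul_relEta_of_rankineHugoniot (v := v)
    (hf.differentiable one_ne_zero _) (hη.differentiable two_ne_zero _)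
    (hq.differentiable one_ne_zero _) (hcomp (S t)) hRH
    (hS.differentiable one_ne_zero t).hasDerivAt (hσ.differentiable one_ne_zero t).hasDerivAt
  have hintegrand : Continuous fun t => deriv σ t * relEta η u (S t) :=
    (hσ.continuous_deriv le_rfl).mul
      ((continuous_relEta (hη.of_le one_le_two) u).comp hS.continuous)
  rw [intervalIntegral.integral_eq_sub_of_hasDerivAt (fun t _ => hprimitive t)
    (hintegrand.intervalIntegrable 0 s), hS0]
  ring

/-- Lax identity: along a Hugoniot curve S(s) with speed σ(s) (S(0)=u, RH condition,
entropy-flux compatibility ∇q = ∇η ∇f), for any s ≥ 0 and any v,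
q(S(s)|v) − σ(s) η(S(s)|v) = q(u|v) − σ(s) η(u|v) + ∫₀ˢ σ'(t) η(u|S(t)) dt. -/
theorem lax_identity {n : ℕ}
    (f : EuclideanSpace ℝ (Fin n) → EuclideanSpace ℝ (Fin n))
    (η q : EuclideanSpace ℝ (Fin n) → ℝ)
    (hf : ContDiff ℝ 1 f) (hη : ContDiff ℝ 2 η)
    (hηconv : StrictConvexOn ℝ Set.univ η) (hq : ContDiff ℝ 1 q)
    (hcomp : ∀ x h, fderiv ℝ q x h = ⟪gradient η x, fderiv ℝ f x h⟫)
    (u : EuclideanSpace ℝ (Fin n)) (S : ℝ → EuclideanSpace ℝ (Fin n)) (σ : ℝ → ℝ)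
    (hS : ContDiff ℝ 1 S) (hσ : ContDiff ℝ 1 σ) (hS0 : S 0 = u)
    (hRH : ∀ s, f (S s) - f u = σ s • (S s - u)) :
    ∀ s ≥ (0:ℝ), ∀ v : EuclideanSpace ℝ (Fin n),
      relQ f η q (S s) v - σ s * relEta η (S s) v
        = relQ f η q u v - σ s * relEta η u v
          + ∫ t in (0:ℝ)..s, deriv σ t * relEta η u (S t) :=
  lax_identity_general f η q hf hη hq hcomp u S σ hS hσ hS0 hRH
end

section
/- Suppose η is C², strictly convex with ∇²η(u_l) > 0, f is C² with ∇²η(u_l)∇f(u_l) symmetric, and ∇q = ∇η ∇f. If λ₁(u_l) denotes the smallest eigenvalue of ∇f(u_l), then for any σ₀ < λ₁(u_l) there exist ε₀ > 0 and β > 0 such that for all u with |u − u_l| < ε₀: −q(u|u_l) + σ₀ η(u|u_l) ≤ −β η(u|u_l). -/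
/-!
Choose `σ₀ < σ < λ₁` and put `h = u - u_l`, `u_t = u_l + t h`. Using `∇q = ∇η ∇f`, the derivative
of `t ↦ -q(u_t|u_l) + σ η(u_t|u_l)` is `(∇η(u_t) - ∇η(u_l)) · (σ - ∇f(u_t)) h`, which to leading
order is `t ⟪∇²η(u_l) (σ - ∇f(u_l)) h, h⟫`. Since `∇f(u_l)` is symmetric for the inner product
`⟪∇²η(u_l) ·, ·⟫`, its minimal Rayleigh quotient for that inner product is an eigenvalue, hence
`≥ λ₁`; so the leading term is `≤ -t (λ₁ - σ) c ‖h‖²` and dominates the error for small `h`.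
Thus `-q(u|u_l) + σ η(u|u_l) ≤ 0` near `u_l`, which is the claim with `β = σ - σ₀`.
-/

open scoped RealInnerProductSpace

open InnerProductSpace Metric Topology

section Homogeneous

variable {E : Type*} [NormedAddCommGroup E] [NormedSpace ℝ E] [FiniteDimensional ℝ E]

/-- Minimise `P / Q` over the unit sphere; by homogeneity the minimiser works on all of `E`. -/
theorem exists_ne_zero_forall_mul_le_mul_of_homogeneous [Nontrivial E] {P Q : E → ℝ}
    (hP : Continuous P) (hQ : Continuous Q) (hPhom : ∀ (t : ℝ) h, P (t • h) = t ^ 2 * P h)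
    (hQhom : ∀ (t : ℝ) h, Q (t • h) = t ^ 2 * Q h) (hQpos : ∀ h ≠ 0, 0 < Q h) :
    ∃ v ≠ 0, ∀ h, P v * Q h ≤ Q v * P h := by
  have hsphere : ∀ h ∈ sphere (0 : E) 1, h ≠ 0 := fun h hh => ne_of_mem_sphere hh one_ne_zero
  obtain ⟨v, hv, hmin⟩ := (isCompact_sphere (0 : E) 1).exists_isMinOn
    (NormedSpace.sphere_nonempty.2 zero_le_one)
    (hP.continuousOn.div hQ.continuousOn fun h hh => (hQpos h (hsphere h hh)).ne')
  refine ⟨v, hsphere v hv, fun h => ?_⟩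
  rcases eq_or_ne h 0 with rfl | h0
  · have hP0 : P 0 = 0 := by simpa using hPhom 0 0
    have hQ0 : Q 0 = 0 := by simpa using hQhom 0 0
    simp [hP0, hQ0]
  have hh : ‖h‖⁻¹ • h ∈ sphere (0 : E) 1 := by simp [norm_smul, h0]
  have : P v / Q v ≤ P (‖h‖⁻¹ • h) / Q (‖h‖⁻¹ • h) := hmin hh
  rw [hPhom, hQhom] at this
  rw [mul_div_mul_left _ _ (by positivity), div_le_div_iff₀ (hQpos v (hsphere v hv)) (hQpos h h0)]
    at this
  linarith

theorem exists_pos_mul_norm_sq_le_of_homogeneous {Q : E → ℝ} (hQ : Continuous Q)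
    (hQhom : ∀ (t : ℝ) h, Q (t • h) = t ^ 2 * Q h) (hQpos : ∀ h ≠ 0, 0 < Q h) :
    ∃ c > 0, ∀ h, c * ‖h‖ ^ 2 ≤ Q h := by
  rcases subsingleton_or_nontrivial E with hE | hE
  · refine ⟨1, one_pos, fun h => ?_⟩
    have hQ0 : Q 0 = 0 := by simpa using hQhom 0 0
    simp [Subsingleton.elim h 0, hQ0]
  obtain ⟨v, hv, hle⟩ := exists_ne_zero_forall_mul_le_mul_of_homogeneous
    (P := Q) (Q := fun h => ‖h‖ ^ 2) hQ (by fun_prop) hQhom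
    (fun t h => by rw [norm_smul, mul_pow, Real.norm_eq_abs, sq_abs]) (fun h h0 => by positivity)
  have hv2 : 0 < ‖v‖ ^ 2 := by positivity
  refine ⟨Q v / ‖v‖ ^ 2, div_pos (hQpos v hv) hv2, fun h => ?_⟩
  rw [div_mul_eq_mul_div, div_le_iff₀ hv2]
  linarith [hle h]

end Homogeneous

section Rayleigh

variable {E : Type*} [NormedAddCommGroup E] [InnerProductSpace ℝ E]

theorem ContinuousLinearMap.IsPositive.apply_eq_zero_of_inner_self_eq_zero {T : E →L[ℝ] E}
    (hT : T.IsPositive) {v : E} (hv : ⟪T v, v⟫ = 0) : T v = 0 := by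
  have horth : ∀ w, ⟪T v, w⟫ = 0 := by
    intro w
    have hquad : ∀ t : ℝ, 0 ≤ ⟪T w, w⟫ * (t * t) + 2 * ⟪T v, w⟫ * t + 0 := by
      intro t
      have hsym : ⟪T w, v⟫ = ⟪T v, w⟫ := by rw [hT.inner_left_eq_inner_right, real_inner_comm]
      have := hT.inner_nonneg_left (v + t • w)
      simp only [map_add, map_smul, inner_add_left, inner_add_right, real_inner_smul_left,
        real_inner_smul_right, hv, hsym] at this
      linarith
    have hsq : ⟪T v, w⟫ ^ 2 ≤ 0 := by
      have := discrim_le_zero hquad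
      rw [discrim] at this
      linarith
    exact pow_eq_zero_iff two_ne_zero |>.1 (le_antisymm hsq (sq_nonneg _))
  exact inner_self_eq_zero.1 (horth (T v))

variable [FiniteDimensional ℝ E]

/-- A minimiser of `⟪H (A h), h⟫ / ⟪H h, h⟫` is an eigenvector of `A`, which is symmetric for the
inner product `⟪H ·, ·⟫`. -/
theorem exists_mem_spectrum_forall_mul_inner_le [Nontrivial E] {H A : E →L[ℝ] E}
    (hH : (H : E →ₗ[ℝ] E).IsSymmetric) (hHpos : ∀ h ≠ 0, 0 < ⟪H h, h⟫)
    (hHA : ((H ∘L A : E →L[ℝ] E) : E →ₗ[ℝ] E).IsSymmetric) :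
    ∃ μ ∈ spectrum ℝ A, ∀ h, μ * ⟪H h, h⟫ ≤ ⟪H (A h), h⟫ := by
  obtain ⟨v, hv, hmin⟩ := exists_ne_zero_forall_mul_le_mul_of_homogeneous
    (P := fun h => ⟪H (A h), h⟫) (Q := fun h => ⟪H h, h⟫) (by fun_prop) (by fun_prop)
    (fun t h => by simp only [map_smul, real_inner_smul_left, real_inner_smul_right]; ring)
    (fun t h => by simp only [map_smul, real_inner_smul_left, real_inner_smul_right]; ring) hHpos
  have hvpos := hHpos v hv
  set μ := ⟪H (A v), v⟫ / ⟪H v, v⟫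
  have hbound : ∀ h, μ * ⟪H h, h⟫ ≤ ⟪H (A h), h⟫ := fun h => by
    rw [div_mul_eq_mul_div, div_le_iff₀ hvpos]
    linarith [hmin h]
  refine ⟨μ, ?_, hbound⟩
  set T := H ∘L A - μ • H
  have hT : T.IsPositive := (ContinuousLinearMap.isPositive_iff T).2
    ⟨hHA.sub (hH.smul (by simp)), fun h => by
      simp [T, inner_sub_left, real_inner_smul_left, hbound h]⟩
  have hTv : T v = 0 := hT.apply_eq_zero_of_inner_self_eq_zero (by
    simp only [T, μ, sub_apply, ContinuousLinearMap.comp_apply,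
      smul_apply, inner_sub_left, real_inner_smul_left]
    field_simp
    ring)
  have hAv : A v = μ • v := by
    by_contra hne
    have := hHpos (A v - μ • v) (sub_ne_zero.2 hne)
    rw [map_sub, map_smul] at this
    simp only [T, sub_apply, ContinuousLinearMap.comp_apply, smul_apply] at hTv
    simp [hTv] at this
  rw [ContinuousLinearMap.spectrum_eq]
  exact Module.End.HasEigenvalue.mem_spectrum
    (Module.End.hasEigenvalue_of_hasEigenvector ⟨Module.End.mem_eigenspace_iff.2 hAv, hv⟩)

theorem mul_inner_le_of_forall_le_spectrum {H A : E →L[ℝ] E}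
    (hH : (H : E →ₗ[ℝ] E).IsSymmetric) (hHpos : ∀ h ≠ 0, 0 < ⟪H h, h⟫)
    (hHA : ((H ∘L A : E →L[ℝ] E) : E →ₗ[ℝ] E).IsSymmetric) {lam : ℝ}
    (hlam : ∀ μ ∈ spectrum ℝ A, lam ≤ μ) (h : E) : lam * ⟪H h, h⟫ ≤ ⟪H (A h), h⟫ := by
  rcases subsingleton_or_nontrivial E with hE | hE
  · simp [Subsingleton.elim h 0]
  obtain ⟨μ, hμ, hμle⟩ := exists_mem_spectrum_forall_mul_inner_le hH hHpos hHA
  rcases eq_or_ne h 0 with rfl | h0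
  · simp
  exact (mul_le_mul_of_nonneg_right (hlam μ hμ) (hHpos h h0).le).trans (hμle h)

end Rayleigh

section Calculus

variable {E G : Type*} [NormedAddCommGroup E] [NormedSpace ℝ E] [NormedAddCommGroup G]
  [NormedSpace ℝ G]

theorem apply_le_apply_of_fderiv_apply_sub_nonpos {F : E → ℝ} {F' : E → E →L[ℝ] ℝ} {s : Set E}
    {x₀ x : E} (hs : Convex ℝ s) (hx₀ : x₀ ∈ s) (hF : ∀ y ∈ s, HasFDerivAt F (F' y) y)
    (hF' : ∀ y ∈ s, F' y (y - x₀) ≤ 0) (hx : x ∈ s) : F x ≤ F x₀ := by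
  set γ : ℝ → E := fun t => x₀ + t • (x - x₀)
  have hγs : ∀ t ∈ Set.Icc (0 : ℝ) 1, γ t ∈ s := fun t ht => hs.add_smul_sub_mem hx₀ hx ht
  have hγ : ∀ t, HasDerivAt γ (x - x₀) t := fun t => by
    simpa only [id, one_smul] using ((hasDerivAt_id t).smul_const (x - x₀)).const_add x₀
  have hφ : ∀ t ∈ Set.Icc (0 : ℝ) 1, HasDerivAt (F ∘ γ) (F' (γ t) (x - x₀)) t :=
    fun t ht => (hF _ (hγs t ht)).comp_hasDerivAt t (hγ t)
  have hanti : AntitoneOn (F ∘ γ) (Set.Icc 0 1) := by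
    refine antitoneOn_of_deriv_nonpos (convex_Icc 0 1)
      (fun t ht => (hφ t ht).continuousAt.continuousWithinAt)
      (fun t ht => (hφ t (interior_subset ht)).differentiableAt.differentiableWithinAt)
      fun t ht => ?_
    rw [interior_Icc] at ht
    rw [(hφ t (Set.Ioo_subset_Icc_self ht)).deriv]
    have := hF' (γ t) (hγs t (Set.Ioo_subset_Icc_self ht))
    rw [show γ t - x₀ = t • (x - x₀) by simp [γ], map_smul, smul_eq_mul] at this
    exact nonpos_of_mul_nonpos_right this ht.1
  simpa [γ] using hanti (Set.left_mem_Icc.2 zero_le_one) (Set.right_mem_Icc.2 zero_le_one)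
    zero_le_one

theorem eventually_comp_apply_sub_nonpos {D : E → G →L[ℝ] ℝ} {D₂ : E →L[ℝ] G →L[ℝ] ℝ}
    {B : E → E →L[ℝ] G} {x₀ : E} {c : ℝ} (hD : HasFDerivAt D D₂ x₀) (hB : ContinuousAt B x₀)
    (hc : 0 < c) (hneg : ∀ k, D₂ k (B x₀ k) ≤ -c * ‖k‖ ^ 2) :
    ∀ᶠ x in 𝓝 x₀, ((D x - D x₀) ∘L B x) (x - x₀) ≤ 0 := by
  set K := ‖B x₀‖ + 1 + ‖D₂‖
  have hK : 0 < K := by positivity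
  set ε := min 1 (c / K)
  have hε : 0 < ε := lt_min one_pos (div_pos hc hK)
  have hε1 : ε ≤ 1 := min_le_left _ _
  have hεK : ε * K ≤ c :=
    (mul_le_mul_of_nonneg_right (min_le_right _ _) hK.le).trans (div_mul_cancel₀ _ hK.ne').le
  filter_upwards [hD.isLittleO.def hε, hB.eventually (closedBall_mem_nhds (B x₀) hε)]
    with x hR hBx
  set k := x - x₀
  rw [dist_eq_norm] at hBx
  have hBnorm : ‖B x‖ ≤ ‖B x₀‖ + ε := (norm_le_norm_add_norm_sub' (B x) (B x₀)).trans (by linarith)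
  have hsplit : ((D x - D x₀) ∘L B x) k
      = D₂ k (B x₀ k) + (D x - D x₀ - D₂ k) (B x k) + D₂ k ((B x - B x₀) k) := by
    simp only [ContinuousLinearMap.comp_apply, sub_apply, map_sub]
    ring
  have hfirst : (D x - D x₀ - D₂ k) (B x k) ≤ ε * ‖k‖ * ((‖B x₀‖ + ε) * ‖k‖) :=
    (le_abs_self _).trans <| (ContinuousLinearMap.le_opNorm _ _).trans <|
      mul_le_mul hR ((B x).le_opNorm k |>.trans (by gcongr)) (norm_nonneg _) (by positivity)
  have hsecond : D₂ k ((B x - B x₀) k) ≤ ‖D₂‖ * ‖k‖ * (ε * ‖k‖) :=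
    (le_abs_self _).trans <| (D₂.le_opNorm₂ _ _).trans <|
      mul_le_mul_of_nonneg_left ((B x - B x₀).le_opNorm k |>.trans (by gcongr)) (by positivity)
  calc ((D x - D x₀) ∘L B x) k
      ≤ -c * ‖k‖ ^ 2 + ε * ‖k‖ * ((‖B x₀‖ + ε) * ‖k‖) + ‖D₂‖ * ‖k‖ * (ε * ‖k‖) := by
        rw [hsplit]; linarith [hneg k]
    _ = (ε * (‖B x₀‖ + ε + ‖D₂‖) - c) * ‖k‖ ^ 2 := by ring
    _ ≤ 0 := mul_nonpos_of_nonpos_of_nonneg (by nlinarith) (sq_nonneg _)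

end Calculus

section Entropy

variable {E : Type*} [NormedAddCommGroup E] [InnerProductSpace ℝ E] [CompleteSpace E]

theorem inner_fderiv_gradient_apply {η : E → ℝ} {x : E}
    (hη : DifferentiableAt ℝ (fderiv ℝ η) x) (v w : E) :
    ⟪fderiv ℝ (gradient η) x v, w⟫ = fderiv ℝ (fderiv ℝ η) x v w := by
  let J : StrongDual ℝ E →L[ℝ] E := (toDual ℝ E).symm.toContinuousLinearEquiv.toContinuousLinearMap
  have hgrad : HasFDerivAt (gradient η) (J ∘L fderiv ℝ (fderiv ℝ η) x) x :=
    J.hasFDerivAt.comp x hη.hasFDerivAt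
  rw [hgrad.fderiv]
  exact toDual_symm_apply

theorem isSymmetric_fderiv_gradient {η : E → ℝ} {x : E} (hη : ContDiffAt ℝ 2 η x) :
    (fderiv ℝ (gradient η) x : E →ₗ[ℝ] E).IsSymmetric := by
  have hD : DifferentiableAt ℝ (fderiv ℝ η) x :=
    (hη.fderiv_right (m := 1) le_rfl).differentiableAt one_ne_zero
  intro v w
  rw [ContinuousLinearMap.coe_coe, inner_fderiv_gradient_apply hD, real_inner_comm,
    inner_fderiv_gradient_apply hD]
  exact hη.isSymmSndFDerivAt (by simp) v w

-- The relative entropy `η(u | ul)` and relative entropy flux `q(u | ul)`.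
noncomputable def relEntropy (η : E → ℝ) (ul u : E) : ℝ :=
  η u - η ul - ⟪gradient η ul, u - ul⟫

noncomputable def relEntropyFlux (η q : E → ℝ) (f : E → E) (ul u : E) : ℝ :=
  q u - q ul - ⟪gradient η ul, f u - f ul⟫

theorem hasFDerivAt_relEntropy {η : E → ℝ} {ul x : E} (hη : DifferentiableAt ℝ η x) :
    HasFDerivAt (relEntropy η ul) (fderiv ℝ η x - fderiv ℝ η ul) x := by
  have hlin : HasFDerivAt (fun u => ⟪gradient η ul, u - ul⟫) (fderiv ℝ η ul) x := by
    rw [← toDual_gradient]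
    exact (toDual ℝ E (gradient η ul)).hasFDerivAt.comp x ((hasFDerivAt_id x).sub_const ul)
  exact (hη.hasFDerivAt.sub_const (η ul)).sub hlin

theorem hasFDerivAt_relEntropyFlux {η q : E → ℝ} {f : E → E} {ul x : E}
    (hf : DifferentiableAt ℝ f x) (hq : HasFDerivAt q (fderiv ℝ η x ∘L fderiv ℝ f x) x) :
    HasFDerivAt (relEntropyFlux η q f ul) ((fderiv ℝ η x - fderiv ℝ η ul) ∘L fderiv ℝ f x) x := by
  have hlin : HasFDerivAt (fun u => ⟪gradient η ul, f u - f ul⟫)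
      (fderiv ℝ η ul ∘L fderiv ℝ f x) x := by
    rw [← toDual_gradient]
    exact (toDual ℝ E (gradient η ul)).hasFDerivAt.comp x (hf.hasFDerivAt.sub_const (f ul))
  rw [ContinuousLinearMap.sub_comp]
  exact (hq.sub_const (q ul)).sub hlin

theorem exists_ball_neg_relEntropyFlux_add_mul_relEntropy_nonpos {f : E → E} {η q : E → ℝ}
    {ul : E} (hf : ContDiff ℝ 1 f) (hη : ContDiff ℝ 2 η)
    (hq : ∀ x, HasFDerivAt q (fderiv ℝ η x ∘L fderiv ℝ f x) x) {σ c : ℝ} (hc : 0 < c)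
    (hneg : ∀ k, fderiv ℝ (fderiv ℝ η) ul k (σ • k - fderiv ℝ f ul k) ≤ -c * ‖k‖ ^ 2) :
    ∃ ε > 0, ∀ u ∈ ball ul ε, -relEntropyFlux η q f ul u + σ * relEntropy η ul u ≤ 0 := by
  set B : E → E →L[ℝ] E := fun x => σ • ContinuousLinearMap.id ℝ E - fderiv ℝ f x
  have hB : Continuous B := continuous_const.sub (hf.continuous_fderiv one_ne_zero)
  have hD : HasFDerivAt (fderiv ℝ η) (fderiv ℝ (fderiv ℝ η) ul) ul :=
    ((hη.fderiv_right (m := 1) le_rfl).differentiable one_ne_zero ul).hasFDerivAt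
  obtain ⟨ε, hε, hsign⟩ := eventually_nhds_iff_ball.1
    (eventually_comp_apply_sub_nonpos hD hB.continuousAt hc (by simpa [B] using hneg))
  have hF : ∀ x, HasFDerivAt (fun u => -relEntropyFlux η q f ul u + σ * relEntropy η ul u)
      ((fderiv ℝ η x - fderiv ℝ η ul) ∘L B x) x := by
    intro x
    refine ((hasFDerivAt_relEntropyFlux (hf.differentiable one_ne_zero x) (hq x)).neg.add
      ((hasFDerivAt_relEntropy (hη.differentiable two_ne_zero x)).const_mul σ)).congr_fderiv ?_
    ext k
    simp only [B, ContinuousLinearMap.comp_apply, add_apply, neg_apply, sub_apply, smul_apply,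
      ContinuousLinearMap.id_apply, map_sub, map_smul, smul_eq_mul]
    ring
  refine ⟨ε, hε, fun u hu => ?_⟩
  simpa [relEntropyFlux, relEntropy] using apply_le_apply_of_fderiv_apply_sub_nonpos
    (convex_ball ul ε) (mem_ball_self hε) (fun x _ => hF x) hsign hu

end Entropy

theorem dissipation_near_left_state_general {n : ℕ}
    (f : EuclideanSpace ℝ (Fin n) → EuclideanSpace ℝ (Fin n))
    (η q : EuclideanSpace ℝ (Fin n) → ℝ) (ul : EuclideanSpace ℝ (Fin n))
    (hf : ContDiff ℝ 2 f) (hη : ContDiff ℝ 2 η) (hq : ContDiff ℝ 2 q)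
    (hcomp : ∀ x h, fderiv ℝ q x h = ⟪gradient η x, fderiv ℝ f x h⟫)
    (Hess : EuclideanSpace ℝ (Fin n) →L[ℝ] EuclideanSpace ℝ (Fin n))
    (hHess : Hess = fderiv ℝ (gradient η) ul)
    (hHpos : ∀ h : EuclideanSpace ℝ (Fin n), h ≠ 0 → 0 < ⟪Hess h, h⟫)
    (hHAsym : ∀ h k : EuclideanSpace ℝ (Fin n),
      ⟪Hess (fderiv ℝ f ul h), k⟫ = ⟪h, Hess (fderiv ℝ f ul k)⟫)
    (lam1 : ℝ)
    (hmin : ∀ μ ∈ spectrum ℝ (fderiv ℝ f ul), lam1 ≤ μ)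
    (σ₀ : ℝ) (hσ₀ : σ₀ < lam1) :
    ∃ ε₀ > (0:ℝ), ∃ β > (0:ℝ), ∀ u : EuclideanSpace ℝ (Fin n), ‖u - ul‖ < ε₀ →
      -(q u - q ul - ⟪gradient η ul, f u - f ul⟫)
          + σ₀ * (η u - η ul - ⟪gradient η ul, u - ul⟫)
        ≤ -β * (η u - η ul - ⟪gradient η ul, u - ul⟫) := by
  subst hHess
  have hHsym := isSymmetric_fderiv_gradient (hη.contDiffAt (x := ul))
  have hD : DifferentiableAt ℝ (fderiv ℝ η) ul :=
    (hη.fderiv_right (m := 1) le_rfl).differentiable one_ne_zero ul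
  obtain ⟨c, hc, hcoer⟩ := exists_pos_mul_norm_sq_le_of_homogeneous (by fun_prop)
    (fun t h => by simp only [map_smul, real_inner_smul_left, real_inner_smul_right]; ring) hHpos
  obtain ⟨σ, hσ₀σ, hσlam⟩ := exists_between hσ₀
  have hneg : ∀ k, fderiv ℝ (fderiv ℝ η) ul k (σ • k - fderiv ℝ f ul k)
      ≤ -((lam1 - σ) * c) * ‖k‖ ^ 2 := fun k => by
    have hHAk : ⟪fderiv ℝ (gradient η) ul k, fderiv ℝ f ul k⟫
        = ⟪fderiv ℝ (gradient η) ul (fderiv ℝ f ul k), k⟫ := by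
      rw [real_inner_comm]; exact (hHsym _ _).symm
    rw [← inner_fderiv_gradient_apply hD, inner_sub_right, real_inner_smul_right, hHAk]
    nlinarith [mul_inner_le_of_forall_le_spectrum hHsym hHpos hHAsym hmin k, hcoer k]
  have hqderiv : ∀ x, HasFDerivAt q (fderiv ℝ η x ∘L fderiv ℝ f x) x := fun x => by
    refine (hq.differentiable two_ne_zero x).hasFDerivAt.congr_fderiv ?_
    ext h
    exact (hcomp x h).trans toDual_symm_apply
  obtain ⟨ε, hε, hball⟩ := exists_ball_neg_relEntropyFlux_add_mul_relEntropy_nonpos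
    (hf.of_le one_le_two) hη hqderiv (mul_pos (sub_pos.2 hσlam) hc) hneg
  refine ⟨ε, hε, σ - σ₀, sub_pos.2 hσ₀σ, fun u hu => ?_⟩
  have := hball u (mem_ball_iff_norm.2 hu)
  simp only [relEntropyFlux, relEntropy] at this
  linarith

/-- Near the left state u_l, with η strictly convex (positive definite Hessian),
∇²η(u_l)∇f(u_l) symmetric, compatibility ∇q = ∇η ∇f, and λ₁ the smallest eigenvalue of
∇f(u_l), for any σ₀ < λ₁ there exist ε₀, β > 0 such that
−q(u|u_l) + σ₀ η(u|u_l) ≤ −β η(u|u_l) whenever |u − u_l| < ε₀. -/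
theorem dissipation_near_left_state {n : ℕ}
    (f : EuclideanSpace ℝ (Fin n) → EuclideanSpace ℝ (Fin n))
    (η q : EuclideanSpace ℝ (Fin n) → ℝ) (ul : EuclideanSpace ℝ (Fin n))
    (hf : ContDiff ℝ 2 f) (hη : ContDiff ℝ 2 η) (hq : ContDiff ℝ 2 q)
    (hcomp : ∀ x h, fderiv ℝ q x h = ⟪gradient η x, fderiv ℝ f x h⟫)
    (Hess : EuclideanSpace ℝ (Fin n) →L[ℝ] EuclideanSpace ℝ (Fin n))
    (hHess : Hess = fderiv ℝ (gradient η) ul)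
    (hHpos : ∀ h : EuclideanSpace ℝ (Fin n), h ≠ 0 → 0 < ⟪Hess h, h⟫)
    (hHAsym : ∀ h k : EuclideanSpace ℝ (Fin n),
      ⟪Hess (fderiv ℝ f ul h), k⟫ = ⟪h, Hess (fderiv ℝ f ul k)⟫)
    (lam1 : ℝ) (hmem : lam1 ∈ spectrum ℝ (fderiv ℝ f ul))
    (hmin : ∀ μ ∈ spectrum ℝ (fderiv ℝ f ul), lam1 ≤ μ)
    (σ₀ : ℝ) (hσ₀ : σ₀ < lam1) :
    ∃ ε₀ > (0:ℝ), ∃ β > (0:ℝ), ∀ u : EuclideanSpace ℝ (Fin n), ‖u - ul‖ < ε₀ →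
      -(q u - q ul - ⟪gradient η ul, f u - f ul⟫)
          + σ₀ * (η u - η ul - ⟪gradient η ul, u - ul⟫)
        ≤ -β * (η u - η ul - ⟪gradient η ul, u - ul⟫) :=
  dissipation_near_left_state_general f η q ul hf hη hq hcomp Hess hHess hHpos hHAsym lam1 hmin σ₀
    hσ₀
end

section
/- There exists a* ∈ (0,1) such that for all 0 < a < a*, the set R_a = { u : η(u|u_l) ≤ a η(u|u_r) } is contained in the ball B_{ε₀}(u_l), where ε₀ > 0 is given. Specifically, if η(u|u_l) ≥ C₁|u − u_l|² on B_{ε₀}(u_l) and η(u|u_r) ≤ C(1 + |u|) is controlled linearly, then for a small, u ∈ R_a ∩ B_{ε₀}(u_l) implies |u − u_l|² ≤ C* a < ε₀²/2, and by convexity and connectedness of R_a one concludes R_a ⊂ B_{ε₀}(u_l). -/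
/-!
On `B_{ε₀}(u_l)` the hypotheses squeeze a point `u` of `R_a` between `C₁|u − u_l|²` and
`C a (1 + |u_l| + ε₀)`, so for small `a` it lies in the closed half ball. Since `R_a` is convex
(a sublevel set of `(1 − a) η` plus an affine function) and contains `u_l`, a point of `R_a`
outside the ball would put a point of the segment to `u_l` at distance `3ε₀/4`, which is impossible.
-/

open scoped RealInnerProductSpace

open Set Metric AffineMap

theorem ConvexOn.add_apply_sub_le_of_hasFDerivAt {E : Type*} [NormedAddCommGroup E]
    [NormedSpace ℝ E] {s : Set E} {f : E → ℝ} {f' : E →L[ℝ] ℝ} {x y : E}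
    (hf : ConvexOn ℝ s f) (hx : x ∈ s) (hy : y ∈ s) (hf' : HasFDerivAt f f' y) :
    f y + f' (x - y) ≤ f x := by
  have hline : ConvexOn ℝ (Icc (0 : ℝ) 1) (f ∘ lineMap y x) :=
    (hf.comp_affineMap (lineMap y x)).subset (fun t ht => hf.1.lineMap_mem hy hx ht)
      (convex_Icc 0 1)
  have hderiv : HasDerivAt (f ∘ lineMap (k := ℝ) y x) (f' (x - y)) 0 := by
    have := (lineMap_apply_zero y x (k := ℝ)).symm ▸ hf'
    simpa using this.comp_hasDerivAt (0 : ℝ) hasDerivAt_lineMap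
  have := hline.le_slope_of_hasDerivAt (by simp) (by simp) zero_lt_one hderiv
  simp only [slope_def_field, Function.comp_apply, lineMap_apply_one, lineMap_apply_zero,
    sub_zero, div_one] at this
  linarith [f'.map_sub x y]

theorem Convex.subset_ball_of_inter_ball_subset_closedBall {E : Type*} [NormedAddCommGroup E]
    [NormedSpace ℝ E] {S : Set E} {c : E} {r ε : ℝ} (hS : Convex ℝ S) (hc : c ∈ S)
    (hr : 0 ≤ r) (hrε : r < ε) (h : S ∩ ball c ε ⊆ closedBall c r) : S ⊆ ball c ε := by
  intro u hu
  by_contra hu_out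
  have hdist : ε ≤ dist u c := not_lt.mp hu_out
  have hdist_pos : 0 < dist u c := by linarith
  set s := (r + ε) / 2 with hs
  have hs_pos : 0 < s := by linarith
  set v := lineMap c u (s / dist u c)
  have hv : dist v c = s := by
    rw [dist_lineMap_left, Real.norm_eq_abs, abs_of_nonneg (by positivity), dist_comm c u]
    field_simp
  have hvS : v ∈ S := hS.lineMap_mem hc hu
    ⟨by positivity, (div_le_one hdist_pos).mpr (by linarith)⟩
  have := h ⟨hvS, by rw [mem_ball, hv, hs]; linarith⟩
  rw [mem_closedBall, hv, hs] at this
  linarith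

variable {n : ℕ} {η : EuclideanSpace ℝ (Fin n) → ℝ}

theorem relEta_self (u : EuclideanSpace ℝ (Fin n)) : relEta η u u = 0 := by
  simp [relEta]

theorem relEta_nonneg (hη : ConvexOn ℝ univ η) (hd : Differentiable ℝ η)
    (u v : EuclideanSpace ℝ (Fin n)) : 0 ≤ relEta η u v := by
  have := hη.add_apply_sub_le_of_hasFDerivAt (mem_univ u) (mem_univ v)
    (hasGradientAt_iff_hasFDerivAt.mp (hd v).hasGradientAt)
  simp only [InnerProductSpace.toDual_apply_apply] at this
  simp only [relEta]
  linarith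

theorem convex_setOf_relEta_le_mul (hη : ConvexOn ℝ univ η) (ul ur : EuclideanSpace ℝ (Fin n))
    {a : ℝ} (ha : a ≤ 1) :
    Convex ℝ {u | relEta η u ul ≤ a * relEta η u ur} := by
  have hconv : ConvexOn ℝ univ fun u => (1 - a) * η u +
      ⟪a • gradient η ur - gradient η ul, u⟫ :=
    (hη.smul (sub_nonneg.mpr ha)).add
      ((innerSL ℝ (a • gradient η ur - gradient η ul)).toLinearMap.convexOn convex_univ)
  convert hconv.convex_le (η ul - ⟪gradient η ul, ul⟫ - a * (η ur - ⟪gradient η ur, ur⟫))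
    using 1
  ext u
  simp only [relEta, mem_ofPred_eq, mem_univ, true_and, inner_sub_right, inner_sub_left,
    real_inner_smul_left]
  constructor <;> intro h <;> linarith

theorem Ra_contained_in_ball_general {n : ℕ}
    (η : EuclideanSpace ℝ (Fin n) → ℝ)
    (hC2 : ContDiff ℝ 2 η) (hconv : StrictConvexOn ℝ Set.univ η)
    (ul ur : EuclideanSpace ℝ (Fin n))
    (ε₀ : ℝ) (hε₀ : 0 < ε₀)
    (C₁ : ℝ) (hC₁ : 0 < C₁)
    (hlow : ∀ u ∈ Metric.ball ul ε₀, C₁ * ‖u - ul‖ ^ 2 ≤ relEta η u ul)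
    (C : ℝ) (hC : 0 < C)
    (hup : ∀ a : ℝ, 0 < a → a < 1/2 →
      ∀ u : EuclideanSpace ℝ (Fin n), relEta η u ul ≤ a * relEta η u ur →
        relEta η u ul ≤ C * a * (1 + ‖u‖)) :
    ∃ astar ∈ Set.Ioo (0:ℝ) 1, ∀ a : ℝ, 0 < a → a < astar →
      {u : EuclideanSpace ℝ (Fin n) | relEta η u ul ≤ a * relEta η u ur}
        ⊆ Metric.ball ul ε₀ := by
  set K := C * (1 + ‖ul‖ + ε₀)
  have hK : 0 < K := by positivity
  refine ⟨min (1 / 2) (C₁ * (ε₀ / 2) ^ 2 / K),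
    ⟨by positivity, (min_le_left _ _).trans_lt (by norm_num)⟩, fun a ha ha_lt => ?_⟩
  have ha_half : a < 1 / 2 := ha_lt.trans_le (min_le_left _ _)
  have haK : a * K < C₁ * (ε₀ / 2) ^ 2 :=
    (lt_div_iff₀ hK).mp (ha_lt.trans_le (min_le_right _ _))
  have hul : relEta η ul ul ≤ a * relEta η ul ur := by
    rw [relEta_self]
    exact mul_nonneg ha.le (relEta_nonneg hconv.convexOn (hC2.differentiable two_ne_zero) ul ur)
  have hRa := convex_setOf_relEta_le_mul hconv.convexOn ul ur (by linarith : a ≤ 1)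
  refine hRa.subset_ball_of_inter_ball_subset_closedBall (r := ε₀ / 2) hul (by positivity)
    (by linarith) fun v ⟨hv, hv_ball⟩ => ?_
  have hv_norm : ‖v‖ ≤ ‖ul‖ + ε₀ := by
    have := norm_le_norm_add_norm_sub' v ul
    rw [mem_ball, dist_eq_norm] at hv_ball
    linarith
  have hsq : C₁ * ‖v - ul‖ ^ 2 < C₁ * (ε₀ / 2) ^ 2 := calc
    C₁ * ‖v - ul‖ ^ 2 ≤ relEta η v ul := hlow v hv_ball
    _ ≤ C * a * (1 + ‖v‖) := hup a ha ha_half v hv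
    _ ≤ a * K := by nlinarith [mul_pos hC ha]
    _ < C₁ * (ε₀ / 2) ^ 2 := haK
  rw [mem_closedBall, dist_eq_norm]
  exact (pow_lt_pow_iff_left₀ (norm_nonneg _) (by positivity) two_ne_zero).mp
    (lt_of_mul_lt_mul_left hsq hC₁.le) |>.le

/-- There exists a* ∈ (0,1) such that for all 0 < a < a*, the set
R_a = { u : η(u|u_l) ≤ a η(u|u_r) } is contained in the ball B_{ε₀}(u_l), given the
quadratic lower bound η(u|u_l) ≥ C₁|u−u_l|² on the ball and the linear control
η(u|u_l) ≤ Ca(1+|u|) on R_a for a < 1/2. -/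
theorem Ra_contained_in_ball {n : ℕ}
    (η : EuclideanSpace ℝ (Fin n) → ℝ)
    (hC2 : ContDiff ℝ 2 η) (hconv : StrictConvexOn ℝ Set.univ η)
    (ul ur : EuclideanSpace ℝ (Fin n)) (hne : ul ≠ ur)
    (ε₀ : ℝ) (hε₀ : 0 < ε₀)
    (C₁ : ℝ) (hC₁ : 0 < C₁)
    (hlow : ∀ u ∈ Metric.ball ul ε₀, C₁ * ‖u - ul‖ ^ 2 ≤ relEta η u ul)
    (C : ℝ) (hC : 0 < C)
    (hup : ∀ a : ℝ, 0 < a → a < 1/2 →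
      ∀ u : EuclideanSpace ℝ (Fin n), relEta η u ul ≤ a * relEta η u ur →
        relEta η u ul ≤ C * a * (1 + ‖u‖)) :
    ∃ astar ∈ Set.Ioo (0:ℝ) 1, ∀ a : ℝ, 0 < a → a < astar →
      {u : EuclideanSpace ℝ (Fin n) | relEta η u ul ≤ a * relEta η u ur}
        ⊆ Metric.ball ul ε₀ :=
  Ra_contained_in_ball_general η hC2 hconv ul ur ε₀ hε₀ C₁ hC₁ hlow C hC hup
end

section
/- For the planar isentropic MHD system with p(v) = v^{−γ}, γ > 1, and B ≠ 0, the fourth characteristic field is genuinely nonlinear: with λ₄ = √α₊ and eigenvector r₄ = (−1, (α₊ − c²)/B, √α₊, −β(α₊−c²)/(B√α₊))ᵀ, one has ∇λ₄ · r₄ > 0, as a consequence of −∂_v α₊ > 0 and ∂_B α₊ · (α₊ − c²)/B > 0. -/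
/-!
`α₊` is the larger root of `X² - a X + b` with `a = (B² + β²)/v + c²` and `b = β² c²/v`.
Since `b < ((B² + β²)/v) c²`, this root exceeds both `(B² + β²)/v` and `c²`, so `2α₊ - a > 0`
and implicit differentiation gives `∂α₊ = (α₊ ∂a - ∂b)/(2α₊ - a)`. In `v` the numerator is
`∂c² (α₊ - β²/v) - ((B² + β²) α₊ - β² c²)/v²`, negative because `c²` is positive and decreasing;
in `B` it is `2 B α₊ / v`, and `(α₊ - c²)/B` has the sign of `B`. The claim for `λ₄ = √α₊`
then follows from the chain rule, as both terms get the same positive factor `1/(2√α₊)`.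
-/

/-- The larger root of `X ^ 2 - a * X + b`, whenever the roots are real. -/
noncomputable def largerRoot (a b : ℝ) : ℝ := (a + √(a ^ 2 - 4 * b)) / 2

lemma sub_sq_lt_sq_sub_four_mul {p q b : ℝ} (h : b < p * q) :
    (p - q) ^ 2 < (p + q) ^ 2 - 4 * b := by
  nlinarith

lemma abs_sub_lt_sqrt_discr {p q b : ℝ} (h : b < p * q) :
    |p - q| < √((p + q) ^ 2 - 4 * b) := by
  rw [Real.lt_sqrt (abs_nonneg _), sq_abs]
  exact sub_sq_lt_sq_sub_four_mul h

lemma lt_largerRoot_left {p q b : ℝ} (h : b < p * q) : p < largerRoot (p + q) b := by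
  have := (abs_sub_lt_iff.mp (abs_sub_lt_sqrt_discr h)).1
  unfold largerRoot
  linarith

lemma lt_largerRoot_right {p q b : ℝ} (h : b < p * q) : q < largerRoot (p + q) b := by
  have := (abs_sub_lt_iff.mp (abs_sub_lt_sqrt_discr h)).2
  unfold largerRoot
  linarith

lemma two_mul_largerRoot_sub (a b : ℝ) : 2 * largerRoot a b - a = √(a ^ 2 - 4 * b) := by
  unfold largerRoot
  ring

/-- Implicit differentiation of `r ^ 2 - a r + b = 0`. -/
lemma HasDerivAt.largerRoot {a b : ℝ → ℝ} {a' b' x : ℝ} (ha : HasDerivAt a a' x)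
    (hb : HasDerivAt b b' x) (hdiscr : 0 < a x ^ 2 - 4 * b x) :
    HasDerivAt (fun y => largerRoot (a y) (b y))
      ((a' * largerRoot (a x) (b x) - b') / (2 * largerRoot (a x) (b x) - a x)) x := by
  have hdiscr_deriv : HasDerivAt (fun y => a y ^ 2 - 4 * b y) (2 * a x * a' - 4 * b') x :=
    ((ha.pow 2).sub (hb.const_mul 4)).congr_deriv (by ring)
  refine ((ha.add (hdiscr_deriv.sqrt hdiscr.ne')).div_const 2).congr_deriv ?_
  rw [two_mul_largerRoot_sub]
  unfold _root_.largerRoot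
  field_simp
  ring

/-- `α₊`, with `c2 v = c²(v)`. -/
noncomputable def fastSpeedSq (β : ℝ) (c2 : ℝ → ℝ) (v B : ℝ) : ℝ :=
  largerRoot ((B ^ 2 + β ^ 2) / v + c2 v) (β ^ 2 * c2 v / v)

lemma sq_mul_div_lt_add_sq_div_mul {β B v c : ℝ} (hv : 0 < v) (hB : B ≠ 0) (hc : 0 < c) :
    β ^ 2 * c / v < (B ^ 2 + β ^ 2) / v * c := by
  rw [div_mul_eq_mul_div, div_lt_div_iff_of_pos_right hv]
  nlinarith [pow_pos (abs_pos.mpr hB) 2, sq_abs B]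

section fastSpeedSq

variable {β : ℝ} {c2 : ℝ → ℝ} {v B : ℝ}

lemma div_lt_fastSpeedSq (hv : 0 < v) (hB : B ≠ 0) (hc : 0 < c2 v) :
    (B ^ 2 + β ^ 2) / v < fastSpeedSq β c2 v B :=
  lt_largerRoot_left (sq_mul_div_lt_add_sq_div_mul hv hB hc)

lemma lt_fastSpeedSq (hv : 0 < v) (hB : B ≠ 0) (hc : 0 < c2 v) :
    c2 v < fastSpeedSq β c2 v B :=
  lt_largerRoot_right (sq_mul_div_lt_add_sq_div_mul hv hB hc)

lemma fastSpeedSq_discr_pos (hv : 0 < v) (hB : B ≠ 0) (hc : 0 < c2 v) :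
    0 < ((B ^ 2 + β ^ 2) / v + c2 v) ^ 2 - 4 * (β ^ 2 * c2 v / v) :=
  (sq_nonneg _).trans_lt (sub_sq_lt_sq_sub_four_mul (sq_mul_div_lt_add_sq_div_mul hv hB hc))

lemma hasDerivAt_fastSpeedSq_volume {c2' : ℝ} (hv : 0 < v) (hB : B ≠ 0) (hc : 0 < c2 v)
    (hc2 : HasDerivAt c2 c2' v) :
    HasDerivAt (fun v' => fastSpeedSq β c2 v' B)
      (((c2' - (B ^ 2 + β ^ 2) / v ^ 2) * fastSpeedSq β c2 v B
          - β ^ 2 * (c2' * v - c2 v) / v ^ 2)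
        / (2 * fastSpeedSq β c2 v B - ((B ^ 2 + β ^ 2) / v + c2 v))) v := by
  have ha : HasDerivAt (fun v' => (B ^ 2 + β ^ 2) / v' + c2 v') (c2' - (B ^ 2 + β ^ 2) / v ^ 2) v :=
    (((hasDerivAt_const v _).div (hasDerivAt_id' v) hv.ne').add hc2).congr_deriv (by ring)
  have hb : HasDerivAt (fun v' => β ^ 2 * c2 v' / v') (β ^ 2 * (c2' * v - c2 v) / v ^ 2) v :=
    ((hc2.const_mul _).div (hasDerivAt_id' v) hv.ne').congr_deriv (by ring)
  exact ha.largerRoot hb (fastSpeedSq_discr_pos hv hB hc)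

lemma deriv_fastSpeedSq_volume_neg {c2' : ℝ} (hv : 0 < v) (hB : B ≠ 0) (hc : 0 < c2 v)
    (hc2 : HasDerivAt c2 c2' v) (hc2' : c2' < 0) :
    deriv (fun v' => fastSpeedSq β c2 v' B) v < 0 := by
  rw [(hasDerivAt_fastSpeedSq_volume hv hB hc hc2).deriv]
  have hαm := div_lt_fastSpeedSq (β := β) hv hB hc
  have hαc := lt_fastSpeedSq (β := β) hv hB hc
  set α := fastSpeedSq β c2 v B
  refine div_neg_of_neg_of_pos ?_ (by linarith)
  have hsplit : (c2' - (B ^ 2 + β ^ 2) / v ^ 2) * α - β ^ 2 * (c2' * v - c2 v) / v ^ 2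
      = c2' * (α - β ^ 2 / v) - ((B ^ 2 + β ^ 2) * α - β ^ 2 * c2 v) / v ^ 2 := by
    field_simp
    ring
  have hβα : β ^ 2 / v < α := by
    refine lt_of_le_of_lt ?_ hαm
    gcongr
    exact le_add_of_nonneg_left (sq_nonneg B)
  have hβc : β ^ 2 * c2 v < (B ^ 2 + β ^ 2) * α := by
    nlinarith [pow_pos (abs_pos.mpr hB) 2, sq_abs B, sq_nonneg β]
  rw [hsplit]
  have := mul_neg_of_neg_of_pos hc2' (sub_pos.mpr hβα)
  have := div_pos (sub_pos.mpr hβc) (pow_pos hv 2)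
  linarith

lemma hasDerivAt_fastSpeedSq_magneticField (hv : 0 < v) (hB : B ≠ 0) (hc : 0 < c2 v) :
    HasDerivAt (fun B' => fastSpeedSq β c2 v B')
      (2 * B / v * fastSpeedSq β c2 v B
        / (2 * fastSpeedSq β c2 v B - ((B ^ 2 + β ^ 2) / v + c2 v))) B := by
  have ha : HasDerivAt (fun B' => (B' ^ 2 + β ^ 2) / v + c2 v) (2 * B / v) B :=
    ((((hasDerivAt_pow 2 B).add_const _).div_const v).add_const _).congr_deriv (by ring)
  exact (ha.largerRoot (hasDerivAt_const B _) (fastSpeedSq_discr_pos hv hB hc)).congr_deriv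
    (by rw [sub_zero]; rfl)

lemma deriv_fastSpeedSq_magneticField_mul_pos (hv : 0 < v) (hB : B ≠ 0) (hc : 0 < c2 v) :
    0 < deriv (fun B' => fastSpeedSq β c2 v B') B * ((fastSpeedSq β c2 v B - c2 v) / B) := by
  rw [(hasDerivAt_fastSpeedSq_magneticField hv hB hc).deriv]
  have hαm := div_lt_fastSpeedSq (β := β) hv hB hc
  have hαc := lt_fastSpeedSq (β := β) hv hB hc
  have hsplit : 2 * B / v * fastSpeedSq β c2 v B
        / (2 * fastSpeedSq β c2 v B - ((B ^ 2 + β ^ 2) / v + c2 v))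
        * ((fastSpeedSq β c2 v B - c2 v) / B)
      = 2 * fastSpeedSq β c2 v B * (fastSpeedSq β c2 v B - c2 v)
        / (v * (2 * fastSpeedSq β c2 v B - ((B ^ 2 + β ^ 2) / v + c2 v))) := by
    field_simp
  rw [hsplit]
  exact div_pos (mul_pos (by linarith) (by linarith)) (mul_pos hv (by linarith))

end fastSpeedSq

theorem mhd_fourth_field_genuinely_nonlinear_general
    (γ β : ℝ) (hγ : 1 < γ)
    (c2 : ℝ → ℝ) (hc2 : ∀ v : ℝ, c2 v = γ * v ^ (-γ - 1))
    (αp : ℝ → ℝ → ℝ)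
    (hαp : ∀ v B : ℝ, αp v B = (1/2) * ((B^2 + β^2)/v + c2 v
      + Real.sqrt (((B^2 + β^2)/v + c2 v)^2 - 4 * β^2 * (c2 v) / v)))
    (v B : ℝ) (hv : 0 < v) (hB : B ≠ 0) :
    0 < -(deriv (fun v' => αp v' B) v) ∧
    0 < (deriv (fun B' => αp v B') B) * ((αp v B - c2 v) / B) ∧
    0 < -(deriv (fun v' => Real.sqrt (αp v' B)) v)
        + (deriv (fun B' => Real.sqrt (αp v B')) B) * ((αp v B - c2 v) / B) := by
  obtain rfl : αp = fastSpeedSq β c2 := by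
    ext v B
    rw [hαp, fastSpeedSq, largerRoot, mul_assoc 4, mul_div_assoc (4 : ℝ)]
    ring
  have hc : 0 < c2 v := hc2 v ▸ mul_pos (by linarith) (Real.rpow_pos_of_pos hv _)
  have hc' : HasDerivAt c2 (γ * ((-γ - 1) * v ^ (-γ - 1 - 1))) v :=
    funext hc2 ▸ (Real.hasDerivAt_rpow_const (Or.inl hv.ne')).const_mul γ
  have hc'_neg : γ * ((-γ - 1) * v ^ (-γ - 1 - 1)) < 0 :=
    mul_neg_of_pos_of_neg (by linarith)
      (mul_neg_of_neg_of_pos (by linarith) (Real.rpow_pos_of_pos hv _))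
  have hvol := deriv_fastSpeedSq_volume_neg (β := β) hv hB hc hc' hc'_neg
  have hmag := deriv_fastSpeedSq_magneticField_mul_pos (β := β) hv hB hc
  refine ⟨neg_pos.mpr hvol, hmag, ?_⟩
  have hα : 0 < fastSpeedSq β c2 v B := hc.trans (lt_fastSpeedSq hv hB hc)
  rw [deriv_sqrt (hasDerivAt_fastSpeedSq_volume hv hB hc hc').differentiableAt hα.ne',
    deriv_sqrt (hasDerivAt_fastSpeedSq_magneticField hv hB hc).differentiableAt hα.ne',
    div_mul_eq_mul_div, ← neg_div, ← add_div]
  exact div_pos (by linarith) (by positivity)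

/-- For planar isentropic MHD with p(v) = v^{−γ}, γ > 1, B ≠ 0, the fourth characteristic
field is genuinely nonlinear: with λ₄ = √α₊ and eigenvector
r₄ = (−1, (α₊ − c²)/B, √α₊, −β(α₊−c²)/(B√α₊)), one has ∇λ₄ · r₄ > 0, as a consequence of
−∂_v α₊ > 0 and ∂_B α₊ · (α₊ − c²)/B > 0 (λ₄ depends only on (v,B)). -/
theorem mhd_fourth_field_genuinely_nonlinear
    (γ β : ℝ) (hγ : 1 < γ) (hβ : β ≠ 0)
    (c2 : ℝ → ℝ) (hc2 : ∀ v : ℝ, c2 v = γ * v ^ (-γ - 1))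
    (αp : ℝ → ℝ → ℝ)
    (hαp : ∀ v B : ℝ, αp v B = (1/2) * ((B^2 + β^2)/v + c2 v
      + Real.sqrt (((B^2 + β^2)/v + c2 v)^2 - 4 * β^2 * (c2 v) / v)))
    (v B : ℝ) (hv : 0 < v) (hB : B ≠ 0) :
    0 < -(deriv (fun v' => αp v' B) v) ∧
    0 < (deriv (fun B' => αp v B') B) * ((αp v B - c2 v) / B) ∧
    0 < -(deriv (fun v' => Real.sqrt (αp v' B)) v)
        + (deriv (fun B' => Real.sqrt (αp v B')) B) * ((αp v B - c2 v) / B) :=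
  mhd_fourth_field_genuinely_nonlinear_general γ β hγ c2 hc2 αp hαp v B hv hB
end

section
/- Fix u_l, u_r in the state space of the full Euler system with e_l > e_r, and let 0 < a < e_r/e_l. Then the sublevel set { u = (ρ, q, ℰ) : η(u|u_l) ≤ a η(u|u_r) } is bounded. In particular, the coefficient c₃ = −(1/(1−a))(a/e_r − 1/e_l) is positive, and since the constrained inequality takes the form (γ ln ρ − ln(ℰ − q²/(2ρ)) − c₁ − c₅)ρ + (c₃/2)ℰ ≤ c₄ with the left side tending to +∞ as ρ → ∞ or ℰ → ∞, the set is bounded. -/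
/-!
Relative entropies differ from `η` by affine functions, so `η(u|u_l) ≤ a η(u|u_r)` reads
`(1 - a) η(u) + (1/e_l - a/e_r) ℰ ≤ κ + P ρ + Q q`, and `a < e_r/e_l` makes the coefficient of `ℰ`
positive. Since `ln ℰ ≤ ε ℰ / ρ - 1 + ln (ρ / ε)`, the term `-ρ ln(ℰ - q²/(2ρ)) ≥ -ρ ln ℰ` costs only a
fraction of `ℰ` plus `ρ ln ρ`, and Young's inequality with `q² < 2ρℰ` absorbs `Q q` the same way.
What is left is `(1 - a)(γ - 1) ρ ln ρ + c ℰ ≤ κ + P' ρ`: superlinear growth of `ρ ln ρ` bounds `ρ`,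
then `ℰ`, and finally `q² < 2ρℰ` bounds `q`.
-/

open Real Filter

noncomputable def eulerEntropy (γ ρ q E : ℝ) : ℝ :=
  γ * ρ * log ρ - ρ * log (E - q ^ 2 / (2 * ρ))

theorem pos_of_sub_sq_div_pos {ρ q E : ℝ} (hρ : 0 < ρ) (hE : 0 < E - q ^ 2 / (2 * ρ)) : 0 < E := by
  have : 0 ≤ q ^ 2 / (2 * ρ) := by positivity
  linarith

theorem mul_log_le_sub_add_mul_log {x y : ℝ} (hx : 0 < x) (hy : 0 < y) :
    x * log y ≤ y - x + x * log x := by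
  have h := mul_le_mul_of_nonneg_left (log_le_sub_one_of_pos (div_pos hy hx)) hx.le
  rw [log_div hy.ne' hx.ne', mul_sub, mul_sub, mul_div_cancel₀ _ hx.ne'] at h
  linarith

theorem mul_le_mul_sq_div_add_sq_div_mul {ρ ε : ℝ} (hρ : 0 < ρ) (hε : 0 < ε) (Q q : ℝ) :
    Q * q ≤ ε * (q ^ 2 / ρ) + Q ^ 2 / (4 * ε) * ρ := by
  have h : ε * (q ^ 2 / ρ) + Q ^ 2 / (4 * ε) * ρ - Q * q = (2 * ε * q - Q * ρ) ^ 2 / (4 * ε * ρ) := by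
    field_simp
    ring
  linarith [show 0 ≤ (2 * ε * q - Q * ρ) ^ 2 / (4 * ε * ρ) by positivity]

theorem le_eulerEntropy {γ ρ q E c : ℝ} (hρ : 0 < ρ) (hE : 0 < E - q ^ 2 / (2 * ρ)) (hc : 0 < c) :
    (γ - 1) * ρ * log ρ + (1 + log c) * ρ - c * E ≤ eulerEntropy γ ρ q E := by
  have hq : 0 ≤ q ^ 2 / (2 * ρ) := by positivity
  have hE0 := pos_of_sub_sq_div_pos hρ hE
  have hlog : log (E - q ^ 2 / (2 * ρ)) ≤ log E := log_le_log hE (by linarith)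
  have h := mul_log_le_sub_add_mul_log hρ (mul_pos hc hE0)
  rw [log_mul hc.ne' hE0.ne'] at h
  unfold eulerEntropy
  linarith [mul_le_mul_of_nonneg_left hlog hρ.le]

theorem exists_bound_of_mul_log_add_le {β c κ P : ℝ} (hβ : 0 < β) (hc : 0 < c) :
    ∃ R, ∀ ρ E, 0 < ρ → 0 < E → β * ρ * log ρ + c * E ≤ κ + P * ρ → ρ ≤ R ∧ E ≤ R := by
  have hlim : Tendsto (fun ρ ↦ ρ * (β * log ρ - P)) atTop atTop := by
    refine tendsto_id.atTop_mul_atTop₀ ?_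
    simpa only [sub_eq_add_neg] using
      tendsto_atTop_add_const_right _ (-P) (tendsto_log_atTop.const_mul_atTop hβ)
  obtain ⟨N, hN⟩ := eventually_atTop.1 (hlim.eventually_gt_atTop κ)
  refine ⟨max N ((κ + |P| * N + β) / c), fun ρ E hρ hE h ↦ ?_⟩
  have hρN : ρ ≤ N := by
    by_contra! hNρ
    linarith [hN ρ hNρ.le, mul_pos hc hE]
  have hmul_log : ρ - 1 ≤ ρ * log ρ := by
    have h := mul_log_le_sub_add_mul_log hρ one_pos
    rw [log_one, mul_zero] at h
    linarith
  have hPρ : P * ρ ≤ |P| * N :=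
    (mul_le_mul_of_nonneg_right (le_abs_self P) hρ.le).trans
      (mul_le_mul_of_nonneg_left hρN (abs_nonneg P))
  refine ⟨hρN.trans (le_max_left _ _), le_max_of_le_right ?_⟩
  rw [le_div_iff₀ hc]
  linarith [mul_le_mul_of_nonneg_left hmul_log hβ.le, mul_pos hβ hρ]

theorem exists_bound_of_eulerEntropy_sublevel {γ b c κ P Q : ℝ} (hγ : 1 < γ) (hb : 0 < b)
    (hc : 0 < c) :
    ∃ R, ∀ ρ q E, 0 < ρ → 0 < E - q ^ 2 / (2 * ρ) →
      b * eulerEntropy γ ρ q E + c * E ≤ κ + P * ρ + Q * q → ρ ≤ R ∧ E ≤ R := by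
  obtain ⟨R, hR⟩ := exists_bound_of_mul_log_add_le (κ := κ)
    (P := P + 2 * Q ^ 2 / c - b * (1 + log (c / (2 * b)))) (mul_pos hb (sub_pos.2 hγ))
    (by positivity : 0 < c / 4)
  refine ⟨R, fun ρ q E hρ hE h ↦ hR ρ E hρ (pos_of_sub_sq_div_pos hρ hE) ?_⟩
  have hq : q ^ 2 / ρ < 2 * E := by
    rw [show q ^ 2 / ρ = 2 * (q ^ 2 / (2 * ρ)) by ring]
    linarith
  have hent := mul_le_mul_of_nonneg_left
    (le_eulerEntropy (γ := γ) hρ hE (by positivity : 0 < c / (2 * b))) hb.le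
  have hyoung := mul_le_mul_sq_div_add_sq_div_mul hρ (by positivity : 0 < c / 8) Q q
  have hbc : b * (c / (2 * b) * E) = c / 2 * E := by field_simp
  have hQ : Q ^ 2 / (4 * (c / 8)) = 2 * Q ^ 2 / c := by field_simp; ring
  rw [hQ] at hyoung
  linarith [mul_le_mul_of_nonneg_left hq.le (by positivity : (0 : ℝ) ≤ c / 8)]

theorem isBounded_eulerEntropy_sublevel {γ b c κ P Q : ℝ} (hγ : 1 < γ) (hb : 0 < b) (hc : 0 < c) :
    Bornology.IsBounded {u : ℝ × ℝ × ℝ | 0 < u.1 ∧ 0 < u.2.2 - u.2.1 ^ 2 / (2 * u.1) ∧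
      b * eulerEntropy γ u.1 u.2.1 u.2.2 + c * u.2.2 ≤ κ + P * u.1 + Q * u.2.1} := by
  obtain ⟨R, hR⟩ := exists_bound_of_eulerEntropy_sublevel (κ := κ) (P := P) (Q := Q) hγ hb hc
  refine isBounded_iff_forall_norm_le.2 ⟨2 * R, fun ⟨ρ, q, E⟩ ⟨hρ, hE, h⟩ ↦ ?_⟩
  obtain ⟨hρR, hER⟩ := hR ρ q E hρ hE h
  have hE0 := pos_of_sub_sq_div_pos hρ hE
  have hq : q ^ 2 < 2 * ρ * E := by
    rw [sub_pos, div_lt_iff₀ (by positivity)] at hE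
    linarith
  simp only [norm_prod_le_iff, Real.norm_eq_abs]
  refine ⟨by rw [abs_of_pos hρ]; linarith, abs_le_of_sq_le_sq ?_ (by linarith), by
    rw [abs_of_pos hE0]; linarith⟩
  nlinarith [mul_le_mul hρR hER hE0.le (hρ.le.trans hρR)]

theorem euler_sublevel_set_bounded_general
    (γ : ℝ) (hγ : 1 < γ)
    (η : ℝ × ℝ × ℝ → ℝ)
    (hη : ∀ u : ℝ × ℝ × ℝ,
      η u = γ * u.1 * Real.log u.1 - u.1 * Real.log (u.2.2 - u.2.1^2 / (2 * u.1)))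
    (D : Set (ℝ × ℝ × ℝ))
    (hD : D = {u : ℝ × ℝ × ℝ | 0 < u.1 ∧ 0 < u.2.2 - u.2.1^2 / (2 * u.1)})
    (eInt : ℝ × ℝ × ℝ → ℝ)
    (heInt : ∀ u : ℝ × ℝ × ℝ, eInt u = (u.2.2 - u.2.1^2 / (2 * u.1)) / u.1)
    (gradη : ℝ × ℝ × ℝ → ℝ × ℝ × ℝ)
    (hgrad : ∀ u ∈ D, gradη u =
      (γ * (Real.log u.1 + 1) - Real.log (u.1 * eInt u) - (u.2.1/u.1)^2 / (2 * eInt u),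
       (u.2.1/u.1) / eInt u,
       -1 / eInt u))
    (relEnt : ℝ × ℝ × ℝ → ℝ × ℝ × ℝ → ℝ)
    (hrel : ∀ u v : ℝ × ℝ × ℝ, relEnt u v = η u - η v
      - (gradη v).1 * (u.1 - v.1) - (gradη v).2.1 * (u.2.1 - v.2.1)
      - (gradη v).2.2 * (u.2.2 - v.2.2))
    (ul ur : ℝ × ℝ × ℝ) (hul : ul ∈ D) (hur : ur ∈ D)
    (hel : eInt ur < eInt ul)
    (a : ℝ) (ha : a < eInt ur / eInt ul) :
    0 < -(1 / (1 - a)) * (a / eInt ur - 1 / eInt ul) ∧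
    Bornology.IsBounded {u ∈ D | relEnt u ul ≤ a * relEnt u ur} := by
  subst hD
  have hel0 : 0 < eInt ul := by rw [heInt]; exact div_pos hul.2 hul.1
  have her0 : 0 < eInt ur := by rw [heInt]; exact div_pos hur.2 hur.1
  have ha1 : 0 < 1 - a := sub_pos.2 (ha.trans ((div_lt_one hel0).2 hel))
  have hc : 0 < 1 / eInt ul - a / eInt ur := by
    rw [sub_pos, div_lt_div_iff₀ her0 hel0]
    linarith [(lt_div_iff₀ hel0).1 ha]
  refine ⟨?_, ?_⟩
  · rw [show -(1 / (1 - a)) * (a / eInt ur - 1 / eInt ul) = (1 / eInt ul - a / eInt ur) / (1 - a)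
      by ring]
    exact div_pos hc ha1
  have hl : (gradη ul).2.2 = -1 / eInt ul := by rw [hgrad ul hul]
  have hr : (gradη ur).2.2 = -1 / eInt ur := by rw [hgrad ur hur]
  refine (isBounded_eulerEntropy_sublevel hγ ha1 hc
    (κ := η ul - (gradη ul).1 * ul.1 - (gradη ul).2.1 * ul.2.1 + ul.2.2 / eInt ul
      - a * (η ur - (gradη ur).1 * ur.1 - (gradη ur).2.1 * ur.2.1 + ur.2.2 / eInt ur))
    (P := (gradη ul).1 - a * (gradη ur).1) (Q := (gradη ul).2.1 - a * (gradη ur).2.1)).subset ?_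
  rintro u ⟨⟨hρ, hE⟩, hle⟩
  refine ⟨hρ, hE, ?_⟩
  rw [hrel, hrel, hl, hr] at hle
  rw [← show η u = eulerEntropy γ u.1 u.2.1 u.2.2 from hη u]
  linear_combination hle

/-- For the full Euler system with e_l > e_r and 0 < a < e_r/e_l, the coefficient
c₃ = −(1/(1−a))(a/e_r − 1/e_l) is positive and the sublevel set
{ u ∈ D : η(u|u_l) ≤ a η(u|u_r) } is bounded. Here u = (ρ, q, ℰ),
η(ρ,q,ℰ) = γρ ln ρ − ρ ln(ℰ − q²/(2ρ)), with gradient given by the explicit partial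
derivatives, and e denotes the internal energy (ℰ − q²/(2ρ))/ρ. -/
theorem euler_sublevel_set_bounded
    (γ : ℝ) (hγ : 1 < γ)
    (η : ℝ × ℝ × ℝ → ℝ)
    (hη : ∀ u : ℝ × ℝ × ℝ,
      η u = γ * u.1 * Real.log u.1 - u.1 * Real.log (u.2.2 - u.2.1^2 / (2 * u.1)))
    (D : Set (ℝ × ℝ × ℝ))
    (hD : D = {u : ℝ × ℝ × ℝ | 0 < u.1 ∧ 0 < u.2.2 - u.2.1^2 / (2 * u.1)})
    (eInt : ℝ × ℝ × ℝ → ℝ)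
    (heInt : ∀ u : ℝ × ℝ × ℝ, eInt u = (u.2.2 - u.2.1^2 / (2 * u.1)) / u.1)
    (gradη : ℝ × ℝ × ℝ → ℝ × ℝ × ℝ)
    (hgrad : ∀ u ∈ D, gradη u =
      (γ * (Real.log u.1 + 1) - Real.log (u.1 * eInt u) - (u.2.1/u.1)^2 / (2 * eInt u),
       (u.2.1/u.1) / eInt u,
       -1 / eInt u))
    (relEnt : ℝ × ℝ × ℝ → ℝ × ℝ × ℝ → ℝ)
    (hrel : ∀ u v : ℝ × ℝ × ℝ, relEnt u v = η u - η v
      - (gradη v).1 * (u.1 - v.1) - (gradη v).2.1 * (u.2.1 - v.2.1)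
      - (gradη v).2.2 * (u.2.2 - v.2.2))
    (ul ur : ℝ × ℝ × ℝ) (hul : ul ∈ D) (hur : ur ∈ D)
    (hel : eInt ur < eInt ul)
    (a : ℝ) (ha0 : 0 < a) (ha : a < eInt ur / eInt ul) :
    0 < -(1 / (1 - a)) * (a / eInt ur - 1 / eInt ul) ∧
    Bornology.IsBounded {u ∈ D | relEnt u ul ≤ a * relEnt u ur} :=
  euler_sublevel_set_bounded_general γ hγ η hη D hD eInt heInt gradη hgrad relEnt hrel ul ur hul hur
    hel a ha
end

section
/- Let σ : [0, s̄] → ℝ and h : [0, s̄] → ℝ be C¹ with σ' continuous, σ'(s₀) ≠ 0 and h'(s₀) ≠ 0 at some s₀ ∈ (0, s̄), with σ' < 0 and h' > 0 near s₀. Then there exist δ > 0 and k > 0 such that for all s with |s − s₀| < δ: ∫_{s₀}^{s} σ'(t)(h(t) − h(s₀)) dt ≤ −k|σ(s) − σ(s₀)|². -/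
/-! Near `s₀`, continuity pins `σ'` between `3σ'(s₀)/2` and `σ'(s₀)/2 < 0` and keeps
`h' ≥ h'(s₀)/2 > 0`. By the mean value theorem `h(t) - h(s₀) = h'(ξ)(t - s₀)`, so the integrand is
`σ'(t) h'(ξ) (t - s₀)` with slope `σ'(t) h'(ξ) ≤ σ'(s₀) h'(s₀)/4`; integrating gives the bound
`-(|σ'(s₀)| h'(s₀)/8) (s - s₀)²`. Since `σ` is `(3/2)|σ'(s₀)|`-Lipschitz there, this is at most
`-k |σ(s) - σ(s₀)|²`. -/

open Set Filter Topology MeasureTheory intervalIntegral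

theorem exists_mem_uIcc_sub_eq_mul {f f' : ℝ → ℝ} {a b : ℝ}
    (hf : ∀ x ∈ uIcc a b, HasDerivAt f (f' x) x) :
    ∃ c ∈ uIcc a b, f b - f a = f' c * (b - a) := by
  have hcont : ContinuousOn f (uIcc a b) := fun x hx => (hf x hx).continuousAt.continuousWithinAt
  rcases lt_trichotomy a b with hab | rfl | hba
  · obtain ⟨c, hc, hslope⟩ := exists_hasDerivAt_eq_slope f f' hab (hcont.mono Icc_subset_uIcc)
      fun x hx => hf x (Icc_subset_uIcc (Ioo_subset_Icc_self hx))
    exact ⟨c, Icc_subset_uIcc (Ioo_subset_Icc_self hc),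
      by rw [hslope, div_mul_cancel₀ _ (sub_ne_zero.2 hab.ne')]⟩
  · exact ⟨a, left_mem_uIcc, by simp⟩
  · obtain ⟨c, hc, hslope⟩ := exists_hasDerivAt_eq_slope f f' hba (hcont.mono Icc_subset_uIcc')
      fun x hx => hf x (Icc_subset_uIcc' (Ioo_subset_Icc_self hx))
    refine ⟨c, Icc_subset_uIcc' (Ioo_subset_Icc_self hc), ?_⟩
    rw [hslope, div_mul_eq_mul_div, eq_div_iff (sub_ne_zero.2 hba.ne')]
    ring

theorem intervalIntegral.integral_le_integral_of_mul_sub_nonpos {f g : ℝ → ℝ} {a b : ℝ}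
    (hf : IntervalIntegrable f volume a b) (hg : IntervalIntegrable g volume a b)
    (hfg : ∀ t ∈ uIcc a b, (b - a) * (f t - g t) ≤ 0) :
    ∫ t in a..b, f t ≤ ∫ t in a..b, g t := by
  rcases lt_trichotomy a b with hab | rfl | hba
  · refine integral_mono_on hab.le hf hg fun t ht => ?_
    exact sub_nonpos.1 (nonpos_of_mul_nonpos_right (hfg t (Icc_subset_uIcc ht)) (sub_pos.2 hab))
  · simp
  · rw [integral_symm b a, integral_symm b a, neg_le_neg_iff]
    refine integral_mono_on hba.le hg.symm hf.symm fun t ht => ?_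
    exact sub_nonneg.1 (nonneg_of_mul_nonpos_right (hfg t (Icc_subset_uIcc' ht)) (sub_neg.2 hba))

section

variable {σ h σ' h' : ℝ → ℝ} {a b α β : ℝ}

theorem integral_mul_sub_le_neg_mul_sq (hσ'c : ContinuousOn σ' (uIcc a b))
    (hh : ∀ x ∈ uIcc a b, HasDerivAt h (h' x) x)
    (hσ' : ∀ x ∈ uIcc a b, σ' x ≤ -α) (hh' : ∀ x ∈ uIcc a b, β ≤ h' x) (hα : 0 ≤ α)
    (hβ : 0 ≤ β) :
    ∫ t in a..b, σ' t * (h t - h a) ≤ -(α * β / 2) * (b - a) ^ 2 := by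
  have hhc : ContinuousOn h (uIcc a b) := fun x hx => (hh x hx).continuousAt.continuousWithinAt
  have hpointwise : ∀ t ∈ uIcc a b,
      (b - a) * (σ' t * (h t - h a) - -(α * β) * (t - a)) ≤ 0 := by
    intro t ht
    obtain ⟨c, hc, hmvt⟩ :=
      exists_mem_uIcc_sub_eq_mul fun x hx => hh x (uIcc_subset_uIcc_left ht hx)
    have hslope : σ' t * h' c + α * β ≤ 0 := by
      nlinarith [hσ' t ht, hh' c (uIcc_subset_uIcc_left ht hc)]
    have horient : 0 ≤ (b - a) * (t - a) := by
      rcases mem_uIcc.1 ht with ⟨h₁, h₂⟩ | ⟨h₁, h₂⟩ <;> nlinarith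
    calc (b - a) * (σ' t * (h t - h a) - -(α * β) * (t - a))
        = (b - a) * (t - a) * (σ' t * h' c + α * β) := by rw [hmvt]; ring
      _ ≤ 0 := mul_nonpos_of_nonneg_of_nonpos horient hslope
  calc ∫ t in a..b, σ' t * (h t - h a)
      ≤ ∫ t in a..b, -(α * β) * (t - a) :=
        integral_le_integral_of_mul_sub_nonpos
          (hσ'c.mul (hhc.sub continuousOn_const)).intervalIntegrable
          ((by fun_prop : Continuous fun t => -(α * β) * (t - a)).intervalIntegrable a b)
          hpointwise
    _ = -(α * β / 2) * (b - a) ^ 2 := by simp; ring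

theorem integral_mul_sub_le_neg_mul_sq_abs_sub {L : ℝ} (hσ : ∀ x ∈ uIcc a b, HasDerivAt σ (σ' x) x)
    (hσ'c : ContinuousOn σ' (uIcc a b)) (hh : ∀ x ∈ uIcc a b, HasDerivAt h (h' x) x)
    (hσ' : ∀ x ∈ uIcc a b, σ' x ≤ -α) (hσ'L : ∀ x ∈ uIcc a b, |σ' x| ≤ L)
    (hh' : ∀ x ∈ uIcc a b, β ≤ h' x) (hα : 0 ≤ α) (hβ : 0 ≤ β) (hL : 0 < L) :
    ∫ t in a..b, σ' t * (h t - h a) ≤ -(α * β / (2 * L ^ 2)) * |σ b - σ a| ^ 2 := by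
  have hlip : |σ b - σ a| ≤ L * |b - a| := by
    simpa using Convex.norm_image_sub_le_of_norm_hasDerivWithin_le
      (fun x hx => (hσ x hx).hasDerivWithinAt) (fun x hx => (hσ'L x hx : ‖σ' x‖ ≤ L))
      (convex_uIcc a b) left_mem_uIcc right_mem_uIcc
  have hsq : |σ b - σ a| ^ 2 ≤ L ^ 2 * (b - a) ^ 2 := by
    rw [← sq_abs (b - a), ← mul_pow]
    exact pow_le_pow_left₀ (abs_nonneg _) hlip 2
  calc ∫ t in a..b, σ' t * (h t - h a)
      ≤ -(α * β / 2) * (b - a) ^ 2 := integral_mul_sub_le_neg_mul_sq hσ'c hh hσ' hh' hα hβ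
    _ ≤ -(α * β / (2 * L ^ 2)) * |σ b - σ a| ^ 2 := by
      rw [neg_mul, neg_mul, neg_le_neg_iff, div_mul_eq_mul_div, div_le_iff₀ (by positivity)]
      nlinarith [mul_nonneg hα hβ]

end

theorem diperna_quantitative_lemma_general
    (sbar s₀ : ℝ) (σ h σ' h' : ℝ → ℝ)
    (hs₀ : s₀ ∈ Set.Ioo (0:ℝ) sbar)
    (hσd : ∀ s ∈ Set.Icc (0:ℝ) sbar, HasDerivAt σ (σ' s) s)
    (hhd : ∀ s ∈ Set.Icc (0:ℝ) sbar, HasDerivAt h (h' s) s)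
    (hσ'c : ContinuousOn σ' (Set.Icc 0 sbar))
    (hh'c : ContinuousOn h' (Set.Icc 0 sbar))
    (hsign : ∀ᶠ s in nhds s₀, σ' s < 0 ∧ 0 < h' s) :
    ∃ δ > (0:ℝ), ∃ k > (0:ℝ), ∀ s : ℝ, |s - s₀| < δ →
      ∫ t in s₀..s, σ' t * (h t - h s₀) ≤ -k * |σ s - σ s₀| ^ 2 := by
  obtain ⟨hσ's₀, hh's₀⟩ := hsign.self_of_nhds
  set α := -σ' s₀ / 2 with hα_def
  set β := h' s₀ / 2 with hβ_def
  set L := -(3 / 2) * σ' s₀ with hL_def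
  have hα : 0 < α := by linarith
  have hβ : 0 < β := by linarith
  have hL : 0 < L := by linarith
  have hIcc : Icc 0 sbar ∈ 𝓝 s₀ := Icc_mem_nhds hs₀.1 hs₀.2
  have hnear : ∀ᶠ t in 𝓝 s₀, t ∈ Icc 0 sbar ∧ σ' t ∈ Icc (-L) (-α) ∧ β ≤ h' t :=
    Filter.Eventually.and hIcc <| ((hσ'c.continuousAt hIcc).eventually
      (Icc_mem_nhds (by linarith) (by linarith))).and
      ((hh'c.continuousAt hIcc).eventually (Ici_mem_nhds (by linarith)))
  obtain ⟨δ, hδ, hball⟩ := Metric.eventually_nhds_iff_ball.1 hnear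
  refine ⟨δ, hδ, α * β / (2 * L ^ 2), by positivity, fun s hs => ?_⟩
  have hsub : uIcc s₀ s ⊆ Metric.ball s₀ δ :=
    (Real.ball_eq_Ioo s₀ δ ▸ ordConnected_Ioo).uIcc_subset (Metric.mem_ball_self hδ)
      (by rwa [Metric.mem_ball, Real.dist_eq])
  have hmem := fun x (hx : x ∈ uIcc s₀ s) => hball x (hsub hx)
  exact integral_mul_sub_le_neg_mul_sq_abs_sub
    (fun x hx => hσd x (hmem x hx).1) (hσ'c.mono fun x hx => (hmem x hx).1)
    (fun x hx => hhd x (hmem x hx).1) (fun x hx => (hmem x hx).2.1.2)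
    (fun x hx => abs_le.2 ⟨(hmem x hx).2.1.1, by linarith [(hmem x hx).2.1.2]⟩)
    (fun x hx => (hmem x hx).2.2) hα.le hβ.le hL

/-- Quantitative core of DiPerna's lemma: if σ, h are C¹ on [0, s̄] (with derivative
functions σ', h' continuous there), σ'(s₀) ≠ 0, h'(s₀) ≠ 0, and σ' < 0, h' > 0 near
s₀ ∈ (0, s̄), then there exist δ > 0 and k > 0 such that for all s with |s − s₀| < δ,
∫_{s₀}^{s} σ'(t)(h(t) − h(s₀)) dt ≤ −k|σ(s) − σ(s₀)|². -/
theorem diperna_quantitative_lemma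
    (sbar s₀ : ℝ) (σ h σ' h' : ℝ → ℝ)
    (hs₀ : s₀ ∈ Set.Ioo (0:ℝ) sbar)
    (hσd : ∀ s ∈ Set.Icc (0:ℝ) sbar, HasDerivAt σ (σ' s) s)
    (hhd : ∀ s ∈ Set.Icc (0:ℝ) sbar, HasDerivAt h (h' s) s)
    (hσ'c : ContinuousOn σ' (Set.Icc 0 sbar))
    (hh'c : ContinuousOn h' (Set.Icc 0 sbar))
    (hσ'0 : σ' s₀ ≠ 0) (hh'0 : h' s₀ ≠ 0)
    (hsign : ∀ᶠ s in nhds s₀, σ' s < 0 ∧ 0 < h' s) :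
    ∃ δ > (0:ℝ), ∃ k > (0:ℝ), ∀ s : ℝ, |s - s₀| < δ →
      ∫ t in s₀..s, σ' t * (h t - h s₀) ≤ -k * |σ s - σ s₀| ^ 2 :=
  diperna_quantitative_lemma_general sbar s₀ σ h σ' h' hs₀ hσd hhd hσ'c hh'c hsign
end
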